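/- For all α, z ∈ ℂ \ {0}, the sequences {f_n(z)}_{n∈ℤ} and {g_n(z)}_{n∈ℤ} both satisfy the second-order difference equation v_{n−1} + (α q^{−n} − z − z^{−1}) v_n + v_{n+1} = 0 for every n ∈ ℤ. -/

import Mathlib

open Complex Filter Topology

/-- Finite q-Pochhammer symbol `(a;q)_n`. -/
noncomputable def qp (q a : ℂ) (n : ℕ) : ℂ := ∏ k ∈ Finset.range n, (1 - a * q ^ k)

/-- Infinite q-Pochhammer symbol `(a;q)_∞`. -/
noncomputable def qpInf (q a : ℂ) : ℂ := ∏' k : ℕ, (1 - a * q ^ k)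

/-- Theta function `θ_q(x) = (x;q)_∞ (q/x;q)_∞`. -/
noncomputable def theta (q x : ℂ) : ℂ := qpInf q x * qpInf q (q / x)

/-- Regularized confluent basic hypergeometric series `₁φ̃₁(0;b;q,w)`. -/
noncomputable def phiT (q b w : ℂ) : ℂ :=
  ∑' k : ℕ, qpInf q (b * q ^ k) * (-1) ^ k * q ^ (k * (k - 1) / 2) * w ^ k / qp q q k

/-- The solution `f_n(z)`. -/
noncomputable def fseq (q α z : ℂ) (n : ℤ) : ℂ :=
  (-1) ^ n * α ^ (-n) * q ^ (n * (n + 1) / 2) *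
    phiT q (q ^ (n + 1) / (α * z)) (z * q ^ (n + 1) / α)

/-- The solution `g_n(z)`. -/
noncomputable def gseq (q α z : ℂ) (n : ℤ) : ℂ :=
  z ^ (-n) * phiT q (α * z * q ^ (1 - n)) (q * z ^ 2)

/-!
Write `φ(b, w)` for `₁φ̃₁(0; b; q, w)`. Two contiguous relations hold:
`φ(b, w) = φ(bq, w) - b φ(bq, qw)`, termwise from `(bq^k;q)_∞ = (1 - bq^k)(bq^{k+1};q)_∞`, and
`φ(b, w) = φ(b, qw) - w φ(bq, qw)`, by a shift of the summation index after
`(1 - q^k) / (q;q)_k = 1 / (q;q)_{k-1}`. Eliminating the auxiliary values between them gives a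
three-term relation in `b` alone, which is the recurrence for `g_n` (with `b = αzq^{-n}`), and one
along the diagonal `(b, w) ↦ (bq, qw)`, which is the recurrence for `f_n`
(with `b = q^n/(αz)`, `w = zq^n/α`) once the prefactors are matched.
-/

section QPochhammer

variable {q : ℂ}

lemma qp_succ (a : ℂ) (n : ℕ) : qp q a (n + 1) = qp q a n * (1 - a * q ^ n) :=
  Finset.prod_range_succ _ n

lemma one_sub_norm_pow_le_norm_qp (hq : ‖q‖ < 1) (k : ℕ) : (1 - ‖q‖) ^ k ≤ ‖qp q q k‖ := by
  rw [qp, norm_prod]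
  calc (1 - ‖q‖) ^ k = ∏ _j ∈ Finset.range k, (1 - ‖q‖) := by simp
    _ ≤ _ := Finset.prod_le_prod (fun _ _ => by linarith) fun j _ => ?_
  calc 1 - ‖q‖ ≤ 1 - ‖q * q ^ j‖ := by
        rw [norm_mul, norm_pow]
        nlinarith [norm_nonneg q, pow_le_one₀ (norm_nonneg q) hq.le (n := j)]
    _ ≤ ‖1 - q * q ^ j‖ := by simpa using norm_sub_norm_le (1 : ℂ) (q * q ^ j)

lemma qp_ne_zero (hq : ‖q‖ < 1) (k : ℕ) : qp q q k ≠ 0 :=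
  norm_pos_iff.mp <| (pow_pos (by linarith) k).trans_le (one_sub_norm_pow_le_norm_qp hq k)

lemma multipliable_one_sub_mul_pow (hq : ‖q‖ < 1) (a : ℂ) :
    Multipliable fun k : ℕ => 1 - a * q ^ k := by
  simpa [sub_eq_add_neg] using Complex.multipliable_one_add_of_summable
    ((summable_geometric_of_norm_lt_one hq).mul_left a).neg

lemma qpInf_eq_one_sub_mul_qpInf (hq : ‖q‖ < 1) (a : ℂ) :
    qpInf q a = (1 - a) * qpInf q (a * q) := by
  have hshift : (fun k : ℕ => 1 - a * q ^ (k + 1)) = fun k => 1 - a * q * q ^ k := by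
    ext k; ring
  rw [qpInf, tprod_eq_zero_mul' (hshift ▸ multipliable_one_sub_mul_pow hq (a * q)), hshift,
    pow_zero, mul_one, qpInf]

lemma norm_qpInf_le (hq : ‖q‖ < 1) (a : ℂ) : ‖qpInf q a‖ ≤ Real.exp (‖a‖ / (1 - ‖q‖)) := by
  have hm := multipliable_one_sub_mul_pow hq a
  have hgeom : Summable fun i : ℕ => ‖a‖ * ‖q‖ ^ i :=
    (summable_geometric_of_lt_one (norm_nonneg q) hq).mul_left _
  rw [qpInf, hm.norm_tprod]
  refine le_of_tendsto' hm.norm.hasProd fun s => ?_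
  calc ∏ i ∈ s, ‖1 - a * q ^ i‖ ≤ ∏ i ∈ s, (1 + ‖a‖ * ‖q‖ ^ i) := by
        refine Finset.prod_le_prod (fun _ _ => norm_nonneg _) fun i _ => ?_
        simpa using norm_sub_le (1 : ℂ) (a * q ^ i)
    _ ≤ Real.exp (∑ i ∈ s, ‖a‖ * ‖q‖ ^ i) :=
        Real.prod_one_add_le_exp_sum s fun _ => by positivity
    _ ≤ Real.exp (‖a‖ / (1 - ‖q‖)) := by
        gcongr
        refine (hgeom.sum_le_tsum s fun _ _ => by positivity).trans_eq ?_
        rw [tsum_mul_left, tsum_geometric_of_lt_one (norm_nonneg q) hq, div_eq_mul_inv]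

end QPochhammer

section Series

variable {q : ℂ}

lemma summable_pow_triangle_mul_pow {x : ℝ} (hx0 : 0 ≤ x) (hx1 : x < 1) {r : ℝ} (hr : 0 ≤ r) :
    Summable fun k : ℕ => x ^ (k * (k - 1) / 2) * r ^ k := by
  refine summable_of_ratio_norm_eventually_le (r := 1 / 2) (by norm_num) ?_
  have ht : Tendsto (fun k : ℕ => x ^ k * r) atTop (𝓝 0) := by
    simpa using (tendsto_pow_atTop_nhds_zero_of_lt_one hx0 hx1).mul_const r
  filter_upwards [ht.eventually_le_const (by norm_num : (0 : ℝ) < 1 / 2)] with k hk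
  rw [Real.norm_of_nonneg (by positivity), Real.norm_of_nonneg (by positivity), Nat.triangle_succ]
  calc x ^ (k * (k - 1) / 2 + k) * r ^ (k + 1)
      = (x ^ k * r) * (x ^ (k * (k - 1) / 2) * r ^ k) := by ring
    _ ≤ 1 / 2 * (x ^ (k * (k - 1) / 2) * r ^ k) := by gcongr

noncomputable def phiTerm (q b w : ℂ) (k : ℕ) : ℂ :=
  qpInf q (b * q ^ k) * (-1) ^ k * q ^ (k * (k - 1) / 2) * w ^ k / qp q q k

lemma phiT_eq_tsum_phiTerm (b w : ℂ) : phiT q b w = ∑' k, phiTerm q b w k := rfl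

lemma summable_phiTerm (hq : ‖q‖ < 1) (b w : ℂ) : Summable (phiTerm q b w) := by
  have h1q : 0 < 1 - ‖q‖ := by linarith
  set M := Real.exp (‖b‖ / (1 - ‖q‖))
  refine Summable.of_norm_bounded ((summable_pow_triangle_mul_pow (norm_nonneg q) hq
    (r := ‖w‖ / (1 - ‖q‖)) (by positivity)).mul_left M) fun k => ?_
  have hqInf : ‖qpInf q (b * q ^ k)‖ ≤ M := by
    refine (norm_qpInf_le hq _).trans (Real.exp_le_exp.mpr ?_)
    gcongr
    rw [norm_mul, norm_pow]
    exact mul_le_of_le_one_right (norm_nonneg b) (pow_le_one₀ (norm_nonneg q) hq.le)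
  have hqp := one_sub_norm_pow_le_norm_qp hq k
  calc ‖phiTerm q b w k‖
      = ‖qpInf q (b * q ^ k)‖ * ‖q‖ ^ (k * (k - 1) / 2) * ‖w‖ ^ k / ‖qp q q k‖ := by
        simp [phiTerm]
    _ ≤ M * ‖q‖ ^ (k * (k - 1) / 2) * ‖w‖ ^ k / (1 - ‖q‖) ^ k := by gcongr
    _ = M * (‖q‖ ^ (k * (k - 1) / 2) * (‖w‖ / (1 - ‖q‖)) ^ k) := by
        rw [div_pow]; ring

lemma phiTerm_eq_sub (hq : ‖q‖ < 1) (b w : ℂ) (k : ℕ) :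
    phiTerm q b w k = phiTerm q (b * q) w k - b * phiTerm q (b * q) (q * w) k := by
  rw [phiTerm, qpInf_eq_one_sub_mul_qpInf hq, show b * q ^ k * q = b * q * q ^ k by ring]
  simp only [phiTerm]
  ring

lemma phiTerm_succ_sub (hq : ‖q‖ < 1) (b w : ℂ) (k : ℕ) :
    phiTerm q b w (k + 1) - phiTerm q b (q * w) (k + 1) = -w * phiTerm q (b * q) (q * w) k := by
  have hk : 1 - q * q ^ k ≠ 0 := right_ne_zero_of_mul (qp_succ q k ▸ qp_ne_zero hq (k + 1))
  have hqp := qp_ne_zero hq k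
  simp only [phiTerm, qp_succ, Nat.triangle_succ, show b * q * q ^ k = b * q ^ (k + 1) by ring]
  field_simp
  ring

theorem phiT_contiguous_b (hq : ‖q‖ < 1) (b w : ℂ) :
    phiT q b w = phiT q (b * q) w - b * phiT q (b * q) (q * w) := by
  simp only [phiT_eq_tsum_phiTerm]
  rw [← tsum_mul_left, ← (summable_phiTerm hq _ _).tsum_sub ((summable_phiTerm hq _ _).mul_left b)]
  exact tsum_congr (phiTerm_eq_sub hq b w)

theorem phiT_contiguous_w (hq : ‖q‖ < 1) (b w : ℂ) :
    phiT q b w = phiT q b (q * w) - w * phiT q (b * q) (q * w) := by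
  have hdiff := (summable_phiTerm hq b w).sub (summable_phiTerm hq b (q * w))
  have hsub : phiT q b w - phiT q b (q * w) = -w * phiT q (b * q) (q * w) := by
    simp only [phiT_eq_tsum_phiTerm]
    rw [← (summable_phiTerm hq b w).tsum_sub (summable_phiTerm hq b (q * w)),
      hdiff.tsum_eq_zero_add, ← tsum_mul_left]
    simp only [phiTerm_succ_sub hq]
    simp [phiTerm]
  linear_combination hsub

theorem phiT_three_term_b (hq : ‖q‖ < 1) (b c : ℂ) :
    phiT q b (q * c) + (b - 1 - c) * phiT q (b * q) (q * c)
      + c * phiT q (b * q * q) (q * c) = 0 := by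
  linear_combination phiT_contiguous_b hq b (q * c) + b * phiT_contiguous_w hq (b * q) (q * c)
    - c * phiT_contiguous_b hq (b * q) (q * c)

theorem phiT_three_term_diag (hq : ‖q‖ < 1) (b w : ℂ) :
    phiT q b w + (w + b - 1) * phiT q (b * q) (q * w)
      + b * w * q * phiT q (b * q * q) (q * (q * w)) = 0 := by
  linear_combination phiT_contiguous_b hq b w + phiT_contiguous_w hq (b * q) w
    + w * phiT_contiguous_b hq (b * q) (q * w)

end Series

section Recurrence

variable {q : ℂ}

lemma zpow_triangle_succ (hq0 : q ≠ 0) (n : ℤ) :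
    q ^ ((n + 1) * (n + 1 + 1) / 2) = q ^ (n * (n + 1) / 2) * q ^ (n + 1) := by
  rw [← zpow_add₀ hq0, show (n + 1) * (n + 1 + 1) = n * (n + 1) + 2 * (n + 1) by ring,
    Int.add_mul_ediv_left _ _ two_ne_zero]

theorem gseq_recurrence (hq : ‖q‖ < 1) (hq0 : q ≠ 0) (α : ℂ) {z : ℂ} (hz : z ≠ 0) (n : ℤ) :
    gseq q α z (n - 1) + (α * q ^ (-n) - z - z⁻¹) * gseq q α z n + gseq q α z (n + 1) = 0 := by
  have h_prev : gseq q α z (n - 1)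
      = z ^ (-n) * z * phiT q (α * z * q ^ (-n) * q * q) (q * z ^ 2) := by
    rw [gseq, show -(n - 1) = -n + 1 by ring, show 1 - (n - 1) = -n + 1 + 1 by ring,
      zpow_add_one₀ hz, zpow_add_one₀ hq0, zpow_add_one₀ hq0]
    ring_nf
  have h_cur : gseq q α z n = z ^ (-n) * phiT q (α * z * q ^ (-n) * q) (q * z ^ 2) := by
    rw [gseq, show 1 - n = -n + 1 by ring, zpow_add_one₀ hq0]
    ring_nf
  have h_next : gseq q α z (n + 1) = z ^ (-n) * z⁻¹ * phiT q (α * z * q ^ (-n)) (q * z ^ 2) := by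
    rw [gseq, show -(n + 1) = -n - 1 by ring, show 1 - (n + 1) = -n by ring, zpow_sub_one₀ hz]
  have key := phiT_three_term_b hq (α * z * q ^ (-n)) (z ^ 2)
  rw [h_prev, h_cur, h_next]
  linear_combination (norm := (field_simp; ring)) (z ^ (-n) * z⁻¹) * key

theorem fseq_recurrence (hq : ‖q‖ < 1) (hq0 : q ≠ 0) {α z : ℂ} (hα : α ≠ 0) (hz : z ≠ 0)
    (n : ℤ) :
    fseq q α z (n - 1) + (α * q ^ (-n) - z - z⁻¹) * fseq q α z n + fseq q α z (n + 1) = 0 := by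
  obtain ⟨P, hP⟩ : ∃ P, P = (-1 : ℂ) ^ n * α ^ (-n) * q ^ (n * (n + 1) / 2) := ⟨_, rfl⟩
  have h_prev : fseq q α z (n - 1)
      = -(α * q ^ (-n)) * P * phiT q (q ^ n / (α * z)) (z * q ^ n / α) := by
    have hT := zpow_triangle_succ hq0 (n - 1)
    rw [sub_add_cancel] at hT
    rw [fseq, sub_add_cancel, hP, hT, zpow_sub_one₀ (neg_ne_zero.mpr one_ne_zero),
      show -(n - 1) = -n + 1 by ring, zpow_add_one₀ hα, zpow_neg q]
    field_simp
  have h_cur : fseq q α z n = P * phiT q (q ^ n / (α * z) * q) (q * (z * q ^ n / α)) := by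
    rw [fseq, hP, zpow_add_one₀ hq0]
    ring_nf
  have h_next : fseq q α z (n + 1)
      = -(q ^ n * q / α) * P * phiT q (q ^ n / (α * z) * q * q) (q * (q * (z * q ^ n / α))) := by
    rw [fseq, hP, zpow_triangle_succ hq0, zpow_add_one₀ (neg_ne_zero.mpr one_ne_zero),
      show -(n + 1) = -n - 1 by ring, zpow_sub_one₀ hα]
    simp only [zpow_add_one₀ hq0]
    ring_nf
  have key := phiT_three_term_diag hq (q ^ n / (α * z)) (z * q ^ n / α)
  rw [h_prev, h_cur, h_next]
  linear_combination (norm := (rw [zpow_neg]; field_simp; ring)) (-(α * q ^ (-n)) * P) * key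

end Recurrence

theorem stmt_11 (q : ℝ) (hq0 : 0 < q) (hq1 : q < 1) (α z : ℂ) (hα : α ≠ 0) (hz : z ≠ 0) :
    (∀ n : ℤ, fseq (q : ℂ) α z (n - 1) +
        (α * (q : ℂ) ^ (-n) - z - z⁻¹) * fseq (q : ℂ) α z n + fseq (q : ℂ) α z (n + 1) = 0) ∧
    (∀ n : ℤ, gseq (q : ℂ) α z (n - 1) +
        (α * (q : ℂ) ^ (-n) - z - z⁻¹) * gseq (q : ℂ) α z n + gseq (q : ℂ) α z (n + 1) = 0) := by
  have hq : ‖(q : ℂ)‖ < 1 := by rwa [Complex.norm_real, Real.norm_of_nonneg hq0.le]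
  have hq0' : (q : ℂ) ≠ 0 := Complex.ofReal_ne_zero.mpr hq0.ne'
  exact ⟨fseq_recurrence hq hq0' hα hz, gseq_recurrence hq hq0' α hz⟩
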